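/- Let (Ω, P) be a probability space, let C ∈ ℝ, and let (X_n) be a sequence of integrable real random variables. Suppose that for every bounded continuous function f : ℝ → ℝ, ∫ f(X_n(ω)) · (X_n(ω) − C) dP(ω) → 0 as n → ∞. Then X_n converges to the constant C in probability: for every ε > 0, P(|X_n − C| ≥ ε) → 0. -/

import Mathlib

open MeasureTheory Filter Topology

/-! If `g ≥ 0` on a pseudometric space is bounded below by a positive constant outside every
ball around `c`, then `∫ g ∘ Yᵢ → 0` forces `Yᵢ → c` in measure by Markov's inequality.
Testing the hypothesis with `f(x) = (x - C) / (1 + (x - C)²)` gives such a `g`, namely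
`g(x) = f(x) (x - C) = (x - C)² / (1 + (x - C)²)`, which is moreover bounded, so that every
`g ∘ Xₙ` is integrable. -/

theorem tendstoInMeasure_const_of_tendsto_integral {Ω E ι : Type*} [MeasurableSpace Ω]
    [PseudoMetricSpace E] {μ : Measure Ω} [IsFiniteMeasure μ] {l : Filter ι}
    {Y : ι → Ω → E} {c : E} {g : E → ℝ} (hg_nonneg : ∀ x, 0 ≤ g x)
    (hg_away : ∀ ε > 0, ∃ δ > 0, ∀ x, ε ≤ dist x c → δ ≤ g x)
    (hint : ∀ i, Integrable (fun ω => g (Y i ω)) μ)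
    (hlim : Tendsto (fun i => ∫ ω, g (Y i ω) ∂μ) l (𝓝 0)) :
    TendstoInMeasure μ Y l (fun _ => c) := by
  rw [tendstoInMeasure_iff_measureReal_dist]
  intro ε hε
  obtain ⟨δ, hδ, hgδ⟩ := hg_away ε hε
  have markov : ∀ i, μ.real {ω | ε ≤ dist (Y i ω) c} ≤ (∫ ω, g (Y i ω) ∂μ) / δ := by
    intro i
    rw [le_div_iff₀' hδ]
    calc δ * μ.real {ω | ε ≤ dist (Y i ω) c}
        ≤ δ * μ.real {ω | δ ≤ g (Y i ω)} :=
          mul_le_mul_of_nonneg_left (measureReal_mono fun ω hω => hgδ _ hω) hδ.le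
      _ ≤ ∫ ω, g (Y i ω) ∂μ :=
          mul_meas_ge_le_integral_of_nonneg (ae_of_all _ fun ω => hg_nonneg _) (hint i) δ
  refine tendsto_of_tendsto_of_tendsto_of_le_of_le tendsto_const_nhds ?_
    (fun i => measureReal_nonneg) markov
  simpa using hlim.div_const δ

theorem sq_div_one_add_sq_le_one (t : ℝ) : t ^ 2 / (1 + t ^ 2) ≤ 1 :=
  div_le_one_of_le₀ (by linarith) (by positivity)

theorem sq_div_one_add_sq_le_of_le_abs {ε t : ℝ} (hε : 0 ≤ ε) (h : ε ≤ |t|) :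
    ε ^ 2 / (1 + ε ^ 2) ≤ t ^ 2 / (1 + t ^ 2) := by
  have hsq : ε ^ 2 ≤ t ^ 2 := by simpa only [sq_abs] using pow_le_pow_left₀ hε h 2
  rw [div_le_div_iff₀ (by positivity) (by positivity)]
  nlinarith

theorem abs_div_one_add_sq_le_one (t : ℝ) : |t / (1 + t ^ 2)| ≤ 1 := by
  rw [abs_div, abs_of_pos (by positivity : (0 : ℝ) < 1 + t ^ 2)]
  refine div_le_one_of_le₀ ?_ (by positivity)
  nlinarith [sq_abs t, sq_nonneg (|t| - 1)]

noncomputable def subDivOneAddSq (C : ℝ) : BoundedContinuousFunction ℝ ℝ :=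
  .ofNormedAddCommGroup (fun x => (x - C) / (1 + (x - C) ^ 2))
    ((continuous_sub_right C).div (by fun_prop) fun x => by positivity) 1
    fun x => abs_div_one_add_sq_le_one (x - C)

theorem subDivOneAddSq_mul_sub (C x : ℝ) :
    subDivOneAddSq C x * (x - C) = (x - C) ^ 2 / (1 + (x - C) ^ 2) := by
  simp only [subDivOneAddSq, BoundedContinuousFunction.coe_ofNormedAddCommGroup]
  ring

theorem tendsto_in_measure_of_bcf_test_general
    {Ω : Type*} [MeasurableSpace Ω] (P : Measure Ω) [IsProbabilityMeasure P]
    (C : ℝ) (X : ℕ → Ω → ℝ)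
    (hXmeas : ∀ n, Measurable (X n))
    (h : ∀ f : BoundedContinuousFunction ℝ ℝ,
      Tendsto (fun n => ∫ ω, f (X n ω) * (X n ω - C) ∂P) atTop (nhds 0)) :
    TendstoInMeasure P X atTop (fun _ => C) := by
  let f := subDivOneAddSq C
  have hg_nonneg : ∀ x, 0 ≤ f x * (x - C) := fun x => by
    rw [subDivOneAddSq_mul_sub]
    positivity
  have hg_away : ∀ ε > 0, ∃ δ > 0, ∀ x, ε ≤ dist x C → δ ≤ f x * (x - C) :=
    fun ε hε => ⟨ε ^ 2 / (1 + ε ^ 2), by positivity, fun x hx => by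
      rw [subDivOneAddSq_mul_sub]
      exact sq_div_one_add_sq_le_of_le_abs hε.le hx⟩
  have hint : ∀ n, Integrable (fun ω => f (X n ω) * (X n ω - C)) P := by
    intro n
    have hg_meas : Measurable fun x => f x * (x - C) := by fun_prop
    refine .of_bound (hg_meas.comp (hXmeas n)).aestronglyMeasurable 1 (ae_of_all _ fun ω => ?_)
    rw [subDivOneAddSq_mul_sub, Real.norm_of_nonneg (by positivity)]
    exact sq_div_one_add_sq_le_one _
  exact tendstoInMeasure_const_of_tendsto_integral hg_nonneg hg_away hint (h f)

/-- **Lemma F.4**: if `E[f(Xₙ)(Xₙ − C)] → 0` for every bounded continuous `f`, then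
`Xₙ → C` in probability. -/
theorem tendsto_in_measure_of_bcf_test
    {Ω : Type*} [MeasurableSpace Ω] (P : Measure Ω) [IsProbabilityMeasure P]
    (C : ℝ) (X : ℕ → Ω → ℝ)
    (hXmeas : ∀ n, Measurable (X n))
    (hXint : ∀ n, Integrable (X n) P)
    (h : ∀ f : BoundedContinuousFunction ℝ ℝ,
      Tendsto (fun n => ∫ ω, f (X n ω) * (X n ω - C) ∂P) atTop (nhds 0)) :
    TendstoInMeasure P X atTop (fun _ => C) :=
  tendsto_in_measure_of_bcf_test_general P C X hXmeas h
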